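/- In the inductive characterization of increasing cones: a cone C ⊆ (R_{≥0})^n is an increasing cone if and only if e₁ = (1,0,…,0) ∈ C and the normal cone N_{e₁}C := {(v₂,…,v_n) ∈ (R_{≥0})^{n−1} : ∃ t₀ > 0 such that (1, t v₂,…, t v_n) ∈ C for all 0 ≤ t ≤ t₀} is an increasing cone in (R_{≥0})^{n−1}. -/

import Mathlib

open Filter Topology

/-- A cone: convex and closed under nonnegative scaling. -/
def IsCone {V : Type*} [AddCommGroup V] [Module ℝ V] (C : Set V) : Prop :=
  Convex ℝ C ∧ ∀ c ∈ C, ∀ a : ℝ, 0 ≤ a → a • c ∈ C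

/-- A dense rational lattice in a real normed vector space. -/
structure RatLattice (V : Type*) [NormedAddCommGroup V] [NormedSpace ℝ V] where
  carrier : Set V
  zero_mem : (0 : V) ∈ carrier
  add_mem : ∀ v ∈ carrier, ∀ w ∈ carrier, v + w ∈ carrier
  ratsmul_mem : ∀ (q : ℚ), ∀ v ∈ carrier, (q : ℝ) • v ∈ carrier
  dense : Dense carrier

/-- A subspace is rational if its rational points are dense in it. -/
def IsRationalSubspace {V : Type*} [NormedAddCommGroup V] [NormedSpace ℝ V]
    (L : RatLattice V) (W : Submodule ℝ V) : Prop :=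
  (W : Set V) ⊆ closure ((W : Set V) ∩ L.carrier)

/-- A vector is generic if it lies in no proper rational subspace. -/
def IsGenericVec {V : Type*} [NormedAddCommGroup V] [NormedSpace ℝ V]
    (L : RatLattice V) (η : V) : Prop :=
  ∀ W : Submodule ℝ V, IsRationalSubspace L W → η ∈ W → W = ⊤

/-- A rational cone: a cone contained in a rational subspace that it spans. -/
def IsRationalCone {V : Type*} [NormedAddCommGroup V] [NormedSpace ℝ V]
    (L : RatLattice V) (C : Set V) : Prop :=
  IsCone C ∧ ∃ W : Submodule ℝ V, IsRationalSubspace L W ∧ C ⊆ (W : Set V) ∧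
    Submodule.span ℝ C = W

/-- An increasing sequence of tuples: all entries positive, each coordinate tends to
infinity, and each later coordinate grows strictly slower than the previous one. -/
def IsIncreasingSeq {n : ℕ} (x : ℕ → Fin n → ℝ) : Prop :=
  (∀ ν i, 0 < x ν i) ∧
  (∀ i, Filter.Tendsto (fun ν => x ν i) Filter.atTop Filter.atTop) ∧
  (∀ i j : Fin n, (i : ℕ) + 1 = (j : ℕ) →
    Filter.Tendsto (fun ν => x ν j / x ν i) Filter.atTop (nhds 0))

/-- The slice of a cone where the coordinates after `i` vanish. -/
def coneSlice {n : ℕ} (C : Set (Fin n → ℝ)) (i : Fin n) : Set (Fin n → ℝ) :=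
  {x | x ∈ C ∧ ∀ j : Fin n, (i : ℕ) < (j : ℕ) → x j = 0}

/-- An increasing cone in the nonnegative orthant: the slice where the last
`n - i` coordinates vanish is an `i`-dimensional cone, for each `i`. -/
def IsIncreasingCone {n : ℕ} (C : Set (Fin n → ℝ)) : Prop :=
  IsCone C ∧ (∀ x ∈ C, ∀ i, 0 ≤ x i) ∧
  ∀ i : Fin n, Module.finrank ℝ (Submodule.span ℝ (coneSlice C i)) = (i : ℕ) + 1

/-- The normal cone of `C` at `e₁ = (1,0,…,0)`. -/
def normalConeAtE1 {n : ℕ} (C : Set (Fin (n + 1) → ℝ)) : Set (Fin n → ℝ) :=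
  {v | (∀ i, 0 ≤ v i) ∧
    ∃ t₀ : ℝ, 0 < t₀ ∧ ∀ t : ℝ, 0 ≤ t → t ≤ t₀ → Fin.cons 1 (t • v) ∈ C}

/-!
Dropping the first coordinate is a linear map `tail` whose kernel is the line through `e₁`.
When `e₁ ∈ C`, the normal cone of `C` at `e₁` is exactly `tail '' C`: a point `x ∈ C` gives
`(1, t • tail x) = (1 - t x₀) • e₁ + t • x ∈ C` for small `t`. The `i`-th slice of `tail '' C` is
the image of the `(i+1)`-st slice of `C`, whose span contains `e₁ ∈ ker tail`, so passing to the
normal cone lowers the dimension of every slice by exactly one. The `0`-th slice of `C` lies on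
the line through `e₁`, and since `C` is nonnegative it is one-dimensional iff `e₁ ∈ C`.
-/

theorem Submodule.finrank_map_add_finrank_ker_of_ker_le {K V W : Type*} [DivisionRing K]
    [AddCommGroup V] [Module K V] [FiniteDimensional K V] [AddCommGroup W] [Module K W]
    (f : V →ₗ[K] W) {T : Submodule K V} (hT : LinearMap.ker f ≤ T) :
    Module.finrank K (T.map f) + Module.finrank K (LinearMap.ker f) = Module.finrank K T := by
  rw [← LinearMap.range_domRestrict, ← (Submodule.comapSubtypeEquivOfLe hT).finrank_eq,
    ← LinearMap.ker_domRestrict]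
  exact (f.domRestrict T).finrank_range_add_finrank_ker

theorem IsCone.image {V W : Type*} [AddCommGroup V] [Module ℝ V] [AddCommGroup W] [Module ℝ W]
    {C : Set V} (hC : IsCone C) (f : V →ₗ[ℝ] W) : IsCone (f '' C) :=
  ⟨hC.1.linear_image f, by
    rintro _ ⟨x, hx, rfl⟩ a ha
    exact ⟨a • x, hC.2 x hx a ha, map_smul f a x⟩⟩

theorem IsCone.add_mem {V : Type*} [AddCommGroup V] [Module ℝ V] {C : Set V} (hC : IsCone C)
    {x y : V} (hx : x ∈ C) (hy : y ∈ C) : x + y ∈ C := by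
  have hmid : (1 / 2 : ℝ) • x + (1 / 2 : ℝ) • y ∈ C := hC.1 hx hy (by norm_num) (by norm_num)
    (by norm_num)
  convert hC.2 _ hmid 2 zero_le_two using 1
  rw [smul_add, smul_smul, smul_smul]
  norm_num

namespace IncreasingCone

variable {n : ℕ}

abbrev e₁ : Fin (n + 1) → ℝ := Fin.cons 1 0

def tail (n : ℕ) : (Fin (n + 1) → ℝ) →ₗ[ℝ] (Fin n → ℝ) := LinearMap.funLeft ℝ ℝ Fin.succ

@[simp]
theorem tail_apply (x : Fin (n + 1) → ℝ) (k : Fin n) : tail n x k = x k.succ := rfl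

theorem e₁_ne_zero : (e₁ : Fin (n + 1) → ℝ) ≠ 0 := fun h => by
  simpa using congrFun h 0

theorem eq_smul_e₁_of_tail_eq_zero {x : Fin (n + 1) → ℝ} (hx : ∀ k : Fin n, x k.succ = 0) :
    x = x 0 • e₁ := by
  funext j
  cases j using Fin.cases <;> simp [hx]

theorem ker_tail : LinearMap.ker (tail n) = Submodule.span ℝ {e₁} := by
  ext x
  rw [LinearMap.mem_ker, Submodule.mem_span_singleton]
  constructor
  · intro hx
    exact ⟨x 0, (eq_smul_e₁_of_tail_eq_zero fun k => congrFun hx k).symm⟩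
  · rintro ⟨a, rfl⟩
    ext k
    simp

theorem e₁_mem_coneSlice {C : Set (Fin (n + 1) → ℝ)} (he : e₁ ∈ C) (i : Fin (n + 1)) :
    e₁ ∈ coneSlice C i := by
  refine ⟨he, fun j hj => ?_⟩
  cases j using Fin.cases
  · simp at hj
  · simp

theorem coneSlice_image_tail (C : Set (Fin (n + 1) → ℝ)) (i : Fin n) :
    coneSlice (tail n '' C) i = tail n '' coneSlice C i.succ := by
  ext v
  constructor
  · rintro ⟨⟨x, hx, rfl⟩, hzero⟩
    refine ⟨x, ⟨hx, fun j hj => ?_⟩, rfl⟩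
    cases j using Fin.cases with
    | zero => simp at hj
    | succ k => exact hzero k (by simpa using hj)
  · rintro ⟨x, ⟨hx, hzero⟩, rfl⟩
    exact ⟨⟨x, hx, rfl⟩, fun k hk => hzero k.succ (by simpa using hk)⟩

section

variable {C : Set (Fin (n + 1) → ℝ)}

theorem tail_mem_normalConeAtE1 (hC : IsCone C) (hpos : ∀ x ∈ C, ∀ i, 0 ≤ x i) (he : e₁ ∈ C)
    {x : Fin (n + 1) → ℝ} (hx : x ∈ C) : tail n x ∈ normalConeAtE1 C := by
  have hx₀ : 0 ≤ x 0 := hpos x hx 0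
  refine ⟨fun k => hpos x hx k.succ, 1 / (x 0 + 1), by positivity, fun t ht ht₀ => ?_⟩
  have hcoef : 0 ≤ 1 - t * x 0 := by
    rw [le_div_iff₀ (by positivity)] at ht₀
    nlinarith
  have hsum : (1 - t * x 0) • e₁ + t • x = Fin.cons 1 (t • tail n x) := by
    funext j
    cases j using Fin.cases <;> simp
  rw [← hsum]
  exact hC.add_mem (hC.2 _ he _ hcoef) (hC.2 _ hx _ ht)

theorem normalConeAtE1_eq_image_tail (hC : IsCone C) (hpos : ∀ x ∈ C, ∀ i, 0 ≤ x i)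
    (he : e₁ ∈ C) : normalConeAtE1 C = tail n '' C := by
  ext v
  constructor
  · rintro ⟨-, t₀, ht₀, hcurve⟩
    refine ⟨t₀⁻¹ • Fin.cons 1 (t₀ • v), hC.2 _ (hcurve t₀ ht₀.le le_rfl) _ (by positivity), ?_⟩
    ext k
    simp [ht₀.ne']
  · rintro ⟨x, hx, rfl⟩
    exact tail_mem_normalConeAtE1 hC hpos he hx

theorem finrank_span_coneSlice_image_tail_add_one (he : e₁ ∈ C) (i : Fin n) :
    Module.finrank ℝ (Submodule.span ℝ (coneSlice (tail n '' C) i)) + 1 =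
      Module.finrank ℝ (Submodule.span ℝ (coneSlice C i.succ)) := by
  have hker : LinearMap.ker (tail n) ≤ Submodule.span ℝ (coneSlice C i.succ) := by
    rw [ker_tail, Submodule.span_le, Set.singleton_subset_iff]
    exact Submodule.subset_span (e₁_mem_coneSlice he _)
  rw [coneSlice_image_tail, Submodule.span_image,
    ← Submodule.finrank_map_add_finrank_ker_of_ker_le _ hker, ker_tail,
    finrank_span_singleton e₁_ne_zero]

theorem span_coneSlice_zero_le_span_e₁ :
    Submodule.span ℝ (coneSlice C 0) ≤ Submodule.span ℝ {e₁} := by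
  rw [Submodule.span_le]
  rintro x ⟨-, hzero⟩
  rw [eq_smul_e₁_of_tail_eq_zero fun k => hzero k.succ (by simp)]
  exact Submodule.smul_mem _ _ (Submodule.mem_span_singleton_self _)

theorem finrank_span_coneSlice_zero (he : e₁ ∈ C) :
    Module.finrank ℝ (Submodule.span ℝ (coneSlice C 0)) = 1 := by
  have hspan : Submodule.span ℝ (coneSlice C 0) = Submodule.span ℝ {e₁} :=
    le_antisymm span_coneSlice_zero_le_span_e₁
      (Submodule.span_le.mpr (Set.singleton_subset_iff.mpr
        (Submodule.subset_span (e₁_mem_coneSlice he 0))))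
  rw [hspan, finrank_span_singleton e₁_ne_zero]

theorem e₁_mem_of_finrank_span_coneSlice_zero (hC : IsCone C) (hpos : ∀ x ∈ C, ∀ i, 0 ≤ x i)
    (h₀ : Module.finrank ℝ (Submodule.span ℝ (coneSlice C 0)) = 1) : e₁ ∈ C := by
  obtain ⟨x, hx, hx_ne⟩ : ∃ x ∈ coneSlice C 0, x ≠ 0 := by
    by_contra! hzero
    rw [(Submodule.span_eq_bot).mpr hzero, finrank_bot] at h₀
    exact zero_ne_one h₀
  have hx_eq : x = x 0 • e₁ := eq_smul_e₁_of_tail_eq_zero fun k => hx.2 k.succ (by simp)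
  have hx₀ : 0 < x 0 := (hpos x hx.1 0).lt_of_ne fun h => hx_ne (by rw [hx_eq, ← h, zero_smul])
  have he : e₁ = (x 0)⁻¹ • x := by
    calc e₁ = (x 0)⁻¹ • (x 0 • e₁) := by rw [smul_smul, inv_mul_cancel₀ hx₀.ne', one_smul]
      _ = (x 0)⁻¹ • x := by rw [← hx_eq]
  rw [he]
  exact hC.2 x hx.1 _ (inv_nonneg.mpr hx₀.le)

end

end IncreasingCone

open IncreasingCone in
/-- Inductive characterization of increasing cones: `C` is an increasing
cone iff `e₁ ∈ C` and the normal cone of `C` at `e₁` is an increasing cone. -/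
theorem increasing_cone_iff_e1_mem_and_normal_cone_increasing
    {n : ℕ} (C : Set (Fin (n + 1) → ℝ)) (hC : IsCone C)
    (hpos : ∀ x ∈ C, ∀ i, 0 ≤ x i) :
    IsIncreasingCone C ↔
      (Fin.cons 1 0 ∈ C ∧ IsIncreasingCone (normalConeAtE1 C)) := by
  constructor
  · rintro ⟨-, -, hrank⟩
    have he : e₁ ∈ C := e₁_mem_of_finrank_span_coneSlice_zero hC hpos (hrank 0)
    refine ⟨he, ?_, fun v hv => hv.1, fun i => ?_⟩
    · rw [normalConeAtE1_eq_image_tail hC hpos he]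
      exact hC.image (tail n)
    · have hsucc := hrank i.succ
      rw [← finrank_span_coneSlice_image_tail_add_one he, Fin.val_succ] at hsucc
      rw [normalConeAtE1_eq_image_tail hC hpos he]
      omega
  · rintro ⟨he, -, -, hrank⟩
    refine ⟨hC, hpos, Fin.cases (finrank_span_coneSlice_zero he) fun i => ?_⟩
    rw [← finrank_span_coneSlice_image_tail_add_one he, Fin.val_succ,
      ← normalConeAtE1_eq_image_tail hC hpos he, hrank i]
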